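/- arXiv:2108.12373 — 3 statements merged into one kernel-verified Lean document; each statement's English description precedes it below -/
import Mathlib

section
/- Suppose 0 < α < 1/λ₁, λ_k > λ_{k+1}, and z_k^(t) ≠ 0 at some time t. Then z_k^(t+1) ≠ 0, and for every l ∈ {k+1, ..., d} the coefficient ratios contract by the factor ρ_k = ((1 + αλ_{k+1})/(1 + αλ_k))² < 1: (z_l^(t+1)/z_k^(t+1))² ≤ ρ_k (z_l^(t)/z_k^(t))². -/
set_option autoImplicit false

open scoped RealInnerProductSpace

/-- `matVec A v` is the matrix-vector product `A v`, viewed as a map on Euclidean space. -/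
noncomputable def matVec {n : ℕ} (A : Matrix (Fin n) (Fin n) ℝ)
    (v : EuclideanSpace ℝ (Fin n)) : EuclideanSpace ℝ (Fin n) :=
  WithLp.toLp 2 (A.mulVec v)

/-!
Write `β = ⟪x, C x⟫ / ‖x‖²` for the Rayleigh quotient of the current iterate. The deflation term
only touches the directions `q₁, …, q_{k-1}`, so for `l ≥ k` every coefficient is simply rescaled,
`⟪q_l, x⁺⟫ = (1 + αλ_l - αβ) ⟪q_l, x⟫`. Since `0 ≤ β ≤ λ₁` and `αλ₁ < 1` these multipliers are
positive, and shifting numerator and denominator by the same `αβ ≥ 0` only shrinks the ratio: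
`(1 + αλ_l - αβ) / (1 + αλ_k - αβ) ≤ (1 + αλ_{k+1}) / (1 + αλ_k)`.
Normalising the iterate rescales all coefficients by the same factor, so it does not affect ratios.
-/

section Rayleigh

variable {E ι : Type*} [NormedAddCommGroup E] [InnerProductSpace ℝ E] {T : E →ₗ[ℝ] E}
  {lam : ι → ℝ}

theorem LinearMap.IsSymmetric.inner_apply_of_apply_eq_smul (hT : T.IsSymmetric) {v : E} {μ : ℝ}
    (hv : T v = μ • v) (y : E) : ⟪v, T y⟫ = μ * ⟪v, y⟫ := by
  rw [← hT, hv, real_inner_smul_left]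

theorem LinearMap.IsSymmetric.inner_deflated_step {κ : Type*} [Fintype κ] (hT : T.IsSymmetric)
    {q : ι → E} (hq : Orthonormal ℝ q) (heig : ∀ i, T (q i) = lam i • q i) (f : κ → ι) {l : ι}
    (hl : ∀ p, f p ≠ l) (α β : ℝ) (x : E) :
    ⟪q l, x + α • (T x - β • x - ∑ p, (lam (f p) * ⟪q (f p), x⟫) • q (f p))⟫ =
      (1 + α * lam l - α * β) * ⟪q l, x⟫ := by
  have horth : ∀ p, ⟪q l, q (f p)⟫ = 0 := fun p => hq.2 (hl p).symm
  simp only [inner_add_right, real_inner_smul_right, inner_sub_right, inner_sum, horth,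
    mul_zero, Finset.sum_const_zero, hT.inner_apply_of_apply_eq_smul (heig l)]
  ring

variable [Fintype ι]

theorem LinearMap.IsSymmetric.inner_self_apply_eq_sum (hT : T.IsSymmetric)
    (b : OrthonormalBasis ι ℝ E) (heig : ∀ i, T (b i) = lam i • b i) (y : E) :
    ⟪y, T y⟫ = ∑ i, lam i * ⟪b i, y⟫ ^ 2 := by
  nth_rw 1 [← b.sum_repr' y]
  simp only [sum_inner, real_inner_smul_left, hT.inner_apply_of_apply_eq_smul (heig _)]
  exact Finset.sum_congr rfl fun i _ => by ring

theorem LinearMap.IsSymmetric.inner_self_apply_nonneg (hT : T.IsSymmetric)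
    (b : OrthonormalBasis ι ℝ E) (heig : ∀ i, T (b i) = lam i • b i) (hnn : ∀ i, 0 ≤ lam i)
    (y : E) : 0 ≤ ⟪y, T y⟫ := by
  rw [hT.inner_self_apply_eq_sum b heig]
  exact Finset.sum_nonneg fun i _ => mul_nonneg (hnn i) (sq_nonneg _)

theorem LinearMap.IsSymmetric.inner_self_apply_le (hT : T.IsSymmetric)
    (b : OrthonormalBasis ι ℝ E) (heig : ∀ i, T (b i) = lam i • b i) {M : ℝ}
    (hM : ∀ i, lam i ≤ M) (y : E) : ⟪y, T y⟫ ≤ M * ‖y‖ ^ 2 := by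
  rw [hT.inner_self_apply_eq_sum b heig, ← b.sum_sq_inner_right, Finset.mul_sum]
  exact Finset.sum_le_sum fun i _ => mul_le_mul_of_nonneg_right (hM i) (sq_nonneg _)

end Rayleigh

theorem Matrix.IsSymm.isSymmetric_toEuclideanLin {n : ℕ} {C : Matrix (Fin n) (Fin n) ℝ}
    (hC : C.IsSymm) : (Matrix.toEuclideanLin C).IsSymmetric :=
  Matrix.isSymmetric_toEuclideanLin_iff.mpr (Matrix.isHermitian_iff_isSelfAdjoint.mpr hC)

theorem matVec_rayleigh_mem_Icc {d : ℕ} (C : Matrix (Fin d) (Fin d) ℝ) (hC : C.IsSymm)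
    (lam : Fin d → ℝ) (q : Fin d → EuclideanSpace ℝ (Fin d)) (hq : Orthonormal ℝ q)
    (heig : ∀ l, matVec C (q l) = lam l • q l) (hnn : ∀ l, 0 ≤ lam l) {M : ℝ}
    (hM : ∀ l, lam l ≤ M) {y : EuclideanSpace ℝ (Fin d)} (hy : y ≠ 0) :
    ⟪y, matVec C y⟫ / ‖y‖ ^ 2 ∈ Set.Icc 0 M := by
  have hT := hC.isSymmetric_toEuclideanLin
  let b := OrthonormalBasis.mk hq
    (hq.linearIndependent.span_eq_top_of_card_eq_finrank' (by simp)).ge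
  have heig' : ∀ i, Matrix.toEuclideanLin C (b i) = lam i • b i := fun i => by
    simp only [b, OrthonormalBasis.coe_mk]; exact heig i
  have hy2 : 0 < ‖y‖ ^ 2 := by positivity
  exact ⟨div_nonneg (hT.inner_self_apply_nonneg b heig' hnn y) hy2.le,
    (div_le_iff₀ hy2).mpr (hT.inner_self_apply_le b heig' hM y)⟩

theorem real_inner_smul_right_div_inner_smul_right {E : Type*} [NormedAddCommGroup E]
    [InnerProductSpace ℝ E] {c : ℝ} (hc : c ≠ 0) (u v x : E) :
    ⟪u, c • x⟫ / ⟪v, c • x⟫ = ⟪u, x⟫ / ⟪v, x⟫ := by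
  simp only [real_inner_smul_right, mul_div_mul_left _ _ hc]

theorem sq_div_sub_le_sq_div {a a' b s : ℝ} (hs : 0 ≤ s) (has : s < a) (haa' : a ≤ a')
    (ha'b : a' ≤ b) : ((a - s) / (b - s)) ^ 2 ≤ (a' / b) ^ 2 := by
  have hb : 0 < b := by linarith
  have hbs : 0 < b - s := by linarith
  have hshift : (a - s) / (b - s) ≤ a / b := by
    rw [div_le_div_iff₀ hbs hb]; nlinarith
  exact pow_le_pow_left₀ (div_nonneg (by linarith) hbs.le)
    (hshift.trans (div_le_div_of_nonneg_right haa' hb.le)) 2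

/-- Indices are 0-based: the 1-based eigenvalue `λ_j` is `lam ⟨j-1, _⟩`, so the 1-based range
`l ∈ {k+1, …, d}` corresponds to the 0-based indices `l` with `k ≤ (l : ℕ)`. -/
theorem krasulina_upper_ratio_contraction
    {d : ℕ}
    (C : Matrix (Fin d) (Fin d) ℝ) (hCsymm : C.IsSymm)
    (lam : Fin d → ℝ) (q : Fin d → EuclideanSpace ℝ (Fin d))
    (hq : Orthonormal ℝ q)
    (heig : ∀ l, matVec C (q l) = lam l • q l)
    (hmono : ∀ i j : Fin d, i ≤ j → lam j ≤ lam i)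
    (hnn : ∀ l, 0 ≤ lam l)
    (k : ℕ) (hk1 : 1 ≤ k) (hkd : k < d)
    (α : ℝ) (hα0 : 0 < α) (hα : α < 1 / lam ⟨0, by omega⟩)
    (hgap : lam ⟨k, by omega⟩ < lam ⟨k - 1, by omega⟩)
    (x : ℕ → EuclideanSpace ℝ (Fin d)) (hxnz : ∀ t, x t ≠ 0)
    (hupd : ∀ t, x (t + 1) = x t + α •
      (matVec C (x t) - (⟪x t, matVec C (x t)⟫ / ‖x t‖ ^ 2) • x t -
        ∑ p : Fin (k - 1),
          (lam (Fin.castLE (by omega) p) * ⟪q (Fin.castLE (by omega) p), x t⟫) •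
            q (Fin.castLE (by omega) p)))
    (t : ℕ) (hzk : ⟪q ⟨k - 1, by omega⟩, ‖x t‖⁻¹ • x t⟫ ≠ 0)
    (ρ : ℝ) (hρ : ρ = ((1 + α * lam ⟨k, by omega⟩) / (1 + α * lam ⟨k - 1, by omega⟩)) ^ 2) :
    ρ < 1 ∧ ⟪q ⟨k - 1, by omega⟩, ‖x (t + 1)‖⁻¹ • x (t + 1)⟫ ≠ 0 ∧
      ∀ l : Fin d, k ≤ (l : ℕ) →
        (⟪q l, ‖x (t + 1)‖⁻¹ • x (t + 1)⟫ /
            ⟪q ⟨k - 1, by omega⟩, ‖x (t + 1)‖⁻¹ • x (t + 1)⟫) ^ 2 ≤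
          ρ * (⟪q l, ‖x t‖⁻¹ • x t⟫ / ⟪q ⟨k - 1, by omega⟩, ‖x t‖⁻¹ • x t⟫) ^ 2 := by
  have hd : 0 < d := by omega
  set κ : Fin d := ⟨k - 1, by omega⟩
  have hmax : ∀ l, lam l ≤ lam ⟨0, hd⟩ := fun l => hmono _ l (Nat.zero_le _)
  have hαlam : α * lam ⟨0, hd⟩ < 1 := by
    rwa [lt_div_iff₀ ((hnn _).trans_lt (hgap.trans_le (hmax κ)))] at hα
  set β := ⟪x t, matVec C (x t)⟫ / ‖x t‖ ^ 2
  obtain ⟨hβ0, hβ1⟩ : β ∈ Set.Icc 0 (lam ⟨0, hd⟩) :=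
    matVec_rayleigh_mem_Icc C hCsymm lam q hq heig hnn hmax (hxnz t)
  have hcoef (l : Fin d) (hl : k - 1 ≤ (l : ℕ)) :
      ⟪q l, x (t + 1)⟫ = (1 + α * lam l - α * β) * ⟪q l, x t⟫ := by
    rw [hupd t]
    exact hCsymm.isSymmetric_toEuclideanLin.inner_deflated_step hq heig _
      (fun p => Fin.ne_of_val_ne (by rw [Fin.val_castLE]; omega)) α β (x t)
  have hinv (s : ℕ) : ‖x s‖⁻¹ ≠ 0 := inv_ne_zero (norm_ne_zero_iff.mpr (hxnz s))
  have hαβ : α * β < 1 := by nlinarith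
  have hden : 0 < 1 + α * lam κ := by nlinarith [hnn κ]
  refine ⟨?_, ?_, fun l hl => ?_⟩
  · rw [hρ]
    exact pow_lt_one₀ (div_nonneg (by nlinarith [hnn ⟨k, hkd⟩]) hden.le)
      ((div_lt_one hden).mpr (by nlinarith)) two_ne_zero
  · rw [real_inner_smul_right, mul_ne_zero_iff_left (hinv t)] at hzk
    rw [real_inner_smul_right, hcoef κ le_rfl]
    exact mul_ne_zero (hinv _) (mul_ne_zero (by nlinarith [hnn κ]) hzk)
  · rw [real_inner_smul_right_div_inner_smul_right (hinv _),
      real_inner_smul_right_div_inner_smul_right (hinv _), hcoef l (by omega), hcoef κ le_rfl,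
      mul_div_mul_comm, mul_pow, hρ]
    have hshift : ((1 + α * lam l - α * β) / (1 + α * lam κ - α * β)) ^ 2 ≤
        ((1 + α * lam ⟨k, hkd⟩) / (1 + α * lam κ)) ^ 2 :=
      sq_div_sub_le_sq_div (mul_nonneg hα0.le hβ0) (by nlinarith [hnn l])
        (by gcongr; exact hmono _ _ hl) (by gcongr)
    exact mul_le_mul_of_nonneg_right hshift (sq_nonneg _)
end

section
/- The map h_t is Lipschitz continuous with Lipschitz constant L_k = (k+5)λ₁ on the set of nonzero vectors: for all nonzero v₁, v₂ ∈ ℝ^d, ‖h_t(v₁) − h_t(v₂)‖ ≤ (k+5)λ₁ ‖v₁ − v₂‖. -/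
/-
Write the map as `T v - R(v) • v - ∑ₚ Pₚ (T v)` with `T = C`, `R` the Rayleigh quotient of `T`
and `Pₚ` the orthogonal projection onto `ℝ ∙ xₚ`. The first term is `‖T‖`-Lipschitz, and so is
each projection term because projections are contractions. The Rayleigh quotient only depends on
the direction `u = ‖v‖⁻¹ • v`, is `2‖T‖`-Lipschitz in `u` on the unit sphere, and
`‖u₁ - u₂‖ * ‖v₂‖ ≤ 2 ‖v₁ - v₂‖`; splitting
`R(v₁) • v₁ - R(v₂) • v₂ = R(v₁) • (v₁ - v₂) + (R(v₁) - R(v₂)) • v₂` bounds the middle term by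
`(1 + 4) ‖T‖ ‖v₁ - v₂‖`. In total the constant is `(1 + 5 + (k - 1)) ‖T‖ ≤ (k + 5) λ₁`.
-/

set_option autoImplicit false

open scoped RealInnerProductSpace

variable {E : Type*} [NormedAddCommGroup E] [InnerProductSpace ℝ E]

theorem norm_inv_norm_smul_le_one (x : E) : ‖‖x‖⁻¹ • x‖ ≤ 1 := by
  rw [norm_smul, norm_inv, norm_norm]
  exact inv_mul_le_one

theorem norm_inv_norm_smul_sub_mul_norm_le (x y : E) :
    ‖‖x‖⁻¹ • x - ‖y‖⁻¹ • y‖ * ‖y‖ ≤ 2 * ‖x - y‖ := by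
  have smul_inv_norm_smul (z : E) : ‖z‖ • ‖z‖⁻¹ • z = z := by
    rcases eq_or_ne z 0 with rfl | hz
    · simp
    · rw [smul_smul, mul_inv_cancel₀ (norm_ne_zero_iff.mpr hz), one_smul]
  have key : ‖y‖ • (‖x‖⁻¹ • x - ‖y‖⁻¹ • y) = (x - y) + (‖y‖ - ‖x‖) • ‖x‖⁻¹ • x := by
    rw [smul_sub, smul_inv_norm_smul, sub_smul, smul_inv_norm_smul]; abel
  calc ‖‖x‖⁻¹ • x - ‖y‖⁻¹ • y‖ * ‖y‖
      = ‖(x - y) + (‖y‖ - ‖x‖) • ‖x‖⁻¹ • x‖ := by rw [← key, norm_smul, norm_norm, mul_comm]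
    _ ≤ ‖x - y‖ + |‖y‖ - ‖x‖| * 1 := by
        grw [norm_add_le, norm_smul, Real.norm_eq_abs, norm_inv_norm_smul_le_one]
    _ ≤ 2 * ‖x - y‖ := by
        grw [abs_norm_sub_norm_le, norm_sub_rev y x]; linarith

namespace ContinuousLinearMap

variable (T : E →L[ℝ] E)

theorem rayleighQuotient_eq_inner_div (x : E) :
    T.rayleighQuotient x = ⟪x, T x⟫ / ‖x‖ ^ 2 := by
  rw [rayleighQuotient, reApplyInnerSelf_apply, RCLike.re_to_real, real_inner_comm]

theorem rayleighQuotient_eq_inner_inv_norm_smul (x : E) :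
    T.rayleighQuotient x = ⟪‖x‖⁻¹ • x, T (‖x‖⁻¹ • x)⟫ := by
  rcases eq_or_ne x 0 with rfl | hx
  · simp
  have hu : ‖‖x‖⁻¹ • x‖ = 1 := by
    rw [norm_smul, norm_inv, norm_norm, inv_mul_cancel₀ (norm_ne_zero_iff.mpr hx)]
  rw [← T.rayleigh_smul x (inv_ne_zero (norm_ne_zero_iff.mpr hx)), rayleighQuotient_eq_inner_div,
    hu, one_pow, div_one]

theorem abs_inner_apply_self_sub_le (x y : E) :
    |⟪x, T x⟫ - ⟪y, T y⟫| ≤ ‖T‖ * (‖x‖ + ‖y‖) * ‖x - y‖ := by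
  have key : ⟪x, T x⟫ - ⟪y, T y⟫ = ⟪x - y, T x⟫ + ⟪y, T (x - y)⟫ := by
    rw [map_sub, inner_sub_left, inner_sub_right]; ring
  rw [key]
  grw [abs_add_le, abs_real_inner_le_norm, abs_real_inner_le_norm, le_opNorm, le_opNorm]
  linarith

theorem abs_rayleighQuotient_sub_mul_norm_le (x y : E) :
    |T.rayleighQuotient x - T.rayleighQuotient y| * ‖y‖ ≤ 4 * ‖T‖ * ‖x - y‖ := by
  rw [T.rayleighQuotient_eq_inner_inv_norm_smul x, T.rayleighQuotient_eq_inner_inv_norm_smul y]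
  grw [abs_inner_apply_self_sub_le, norm_inv_norm_smul_le_one, norm_inv_norm_smul_le_one,
    mul_assoc, norm_inv_norm_smul_sub_mul_norm_le]
  linarith

theorem norm_rayleighQuotient_smul_sub_le (x y : E) :
    ‖T.rayleighQuotient x • x - T.rayleighQuotient y • y‖ ≤ 5 * ‖T‖ * ‖x - y‖ := by
  have key : T.rayleighQuotient x • x - T.rayleighQuotient y • y =
      T.rayleighQuotient x • (x - y) + (T.rayleighQuotient x - T.rayleighQuotient y) • y := by
    rw [smul_sub, sub_smul]; abel
  rw [key]
  grw [norm_add_le, norm_smul, norm_smul, Real.norm_eq_abs, Real.norm_eq_abs,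
    rayleighQuotient_le_norm, abs_rayleighQuotient_sub_mul_norm_le]
  linarith

theorem norm_apply_sub_rayleighQuotient_smul_sub_le (x y : E) :
    ‖(T x - T.rayleighQuotient x • x) - (T y - T.rayleighQuotient y • y)‖ ≤
      6 * ‖T‖ * ‖x - y‖ := by
  rw [sub_sub_sub_comm, ← map_sub]
  grw [norm_sub_le, le_opNorm, norm_rayleighQuotient_smul_sub_le]
  linarith

end ContinuousLinearMap

theorem norm_sum_starProjection_le {ι : Type*} (s : Finset ι) (K : ι → Submodule ℝ E)
    [∀ i, (K i).HasOrthogonalProjection] (x : E) :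
    ‖∑ i ∈ s, (K i).starProjection x‖ ≤ s.card * ‖x‖ := by
  grw [norm_sum_le,
    Finset.sum_le_card_nsmul _ _ ‖x‖ fun i _ => (K i).norm_starProjection_apply_le x]
  rw [nsmul_eq_mul]

theorem real_inner_div_norm_sq_smul_eq_starProjection (x y : E) :
    (⟪x, y⟫ / ‖x‖ ^ 2) • x = (ℝ ∙ x).starProjection y := by
  rw [Submodule.starProjection_singleton, RCLike.ofReal_real_eq_id, id]

noncomputable def deflatedKrasulinaMap {ι : Type*} [Fintype ι] (T : E →L[ℝ] E) (xs : ι → E)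
    (v : E) : E :=
  T v - (⟪v, T v⟫ / ‖v‖ ^ 2) • v - ∑ p, (⟪xs p, T v⟫ / ‖xs p‖ ^ 2) • xs p

theorem norm_deflatedKrasulinaMap_sub_le {ι : Type*} [Fintype ι] (T : E →L[ℝ] E) (xs : ι → E)
    (v₁ v₂ : E) :
    ‖deflatedKrasulinaMap T xs v₁ - deflatedKrasulinaMap T xs v₂‖ ≤
      (Fintype.card ι + 6) * ‖T‖ * ‖v₁ - v₂‖ := by
  simp only [deflatedKrasulinaMap, ← T.rayleighQuotient_eq_inner_div,
    real_inner_div_norm_sq_smul_eq_starProjection]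
  rw [sub_sub_sub_comm, ← Finset.sum_sub_distrib]
  simp only [← map_sub]
  grw [norm_sub_le, T.norm_apply_sub_rayleighQuotient_smul_sub_le, norm_sum_starProjection_le,
    T.le_opNorm]
  rw [Finset.card_univ]
  linarith

theorem deflated_krasulina_pseudograd_lipschitz_general
    {d : ℕ}
    (C : Matrix (Fin d) (Fin d) ℝ)
    (lam1 : ℝ) (hlam1 : 0 < lam1)
    (hCnorm : ∀ v : EuclideanSpace ℝ (Fin d), ‖matVec C v‖ ≤ lam1 * ‖v‖)
    (k : ℕ) (hk : 1 ≤ k)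
    (xs : Fin (k - 1) → EuclideanSpace ℝ (Fin d))
    (v₁ v₂ : EuclideanSpace ℝ (Fin d)) :
    ‖(matVec C v₁ - (⟪v₁, matVec C v₁⟫ / ‖v₁‖ ^ 2) • v₁ -
          ∑ p, (⟪xs p, matVec C v₁⟫ / ‖xs p‖ ^ 2) • xs p) -
        (matVec C v₂ - (⟪v₂, matVec C v₂⟫ / ‖v₂‖ ^ 2) • v₂ -
          ∑ p, (⟪xs p, matVec C v₂⟫ / ‖xs p‖ ^ 2) • xs p)‖ ≤
      ((k : ℝ) + 5) * lam1 * ‖v₁ - v₂‖ := by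
  let T := Matrix.toEuclideanCLM (𝕜 := ℝ) C
  have hT : ‖T‖ ≤ lam1 := T.opNorm_le_bound hlam1.le hCnorm
  -- `matVec C` is `Matrix.toEuclideanCLM C` definitionally.
  calc _ = ‖deflatedKrasulinaMap T xs v₁ - deflatedKrasulinaMap T xs v₂‖ := rfl
    _ ≤ (Fintype.card (Fin (k - 1)) + 6) * ‖T‖ * ‖v₁ - v₂‖ :=
        norm_deflatedKrasulinaMap_sub_le T xs v₁ v₂
    _ = ((k : ℝ) + 5) * ‖T‖ * ‖v₁ - v₂‖ := by
        rw [Fintype.card_fin, Nat.cast_sub hk]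
        ring
    _ ≤ ((k : ℝ) + 5) * lam1 * ‖v₁ - v₂‖ := by grw [hT]

/-- the deflated Krasulina pseudo-gradient map
`h_t(v) = Cv - (vᵀCv/‖v‖²)v - Σ_{p=1}^{k-1} (x_p x_pᵀ/‖x_p‖²) C v`
is Lipschitz with constant `(k+5)λ₁` on nonzero vectors, where `‖C‖ ≤ λ₁` is the
spectral-norm bound on the symmetric PSD matrix `C` and `x_1, …, x_{k-1}` are
nonzero vectors. -/
theorem deflated_krasulina_pseudograd_lipschitz
    {d : ℕ}
    (C : Matrix (Fin d) (Fin d) ℝ) (hCsymm : C.IsSymm) (hCpsd : C.PosSemidef)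
    (lam1 : ℝ) (hlam1 : 0 < lam1)
    (hCnorm : ∀ v : EuclideanSpace ℝ (Fin d), ‖matVec C v‖ ≤ lam1 * ‖v‖)
    (k : ℕ) (hk : 1 ≤ k)
    (xs : Fin (k - 1) → EuclideanSpace ℝ (Fin d)) (hxs : ∀ p, xs p ≠ 0)
    (v₁ v₂ : EuclideanSpace ℝ (Fin d)) (hv₁ : v₁ ≠ 0) (hv₂ : v₂ ≠ 0) :
    ‖(matVec C v₁ - (⟪v₁, matVec C v₁⟫ / ‖v₁‖ ^ 2) • v₁ -
          ∑ p, (⟪xs p, matVec C v₁⟫ / ‖xs p‖ ^ 2) • xs p) -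
        (matVec C v₂ - (⟪v₂, matVec C v₂⟫ / ‖v₂‖ ^ 2) • v₂ -
          ∑ p, (⟪xs p, matVec C v₂⟫ / ‖xs p‖ ^ 2) • xs p)‖ ≤
      ((k : ℝ) + 5) * lam1 * ‖v₁ - v₂‖ :=
  deflated_krasulina_pseudograd_lipschitz_general C lam1 hlam1 hCnorm k hk xs v₁ v₂
end

section
/- Fix t ≥ 1 and suppose that the averages of the tracking variables satisfy (1/M)Σ_{i=1}^M s_i^(t−1) = g^(t−1). Then the consensus error satisfies the recursion (Σ_{i=1}^M ‖x_i^(t) − x̄^(t)‖²)^{1/2} ≤ ((1+β)/2) (Σ_{i=1}^M ‖x_i^(t−1) − x̄^(t−1)‖²)^{1/2} + α (Σ_{i=1}^M ‖s_i^(t−1) − g^(t−1)‖²)^{1/2}. -/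
/-!
With `y_i = x_i − x̄` and `e_i = s_i − g`, the mixing step `X ↦ (X + (W ⊗ I) X) / 2` preserves
the mean (columns of `W` sum to one) and commutes with centering (rows sum to one), and the
tracking hypothesis identifies the mean of `s` with `g`; so the new consensus error is
`(y + (W ⊗ I) y) / 2 + α e`. Each coordinate column of `y` sums to zero, and expanding it in the
eigenbasis of `W` gives `‖(I + W) y‖ ≤ (1 + β) ‖y‖`: all eigenvalues but the leading one `1` are
at most `β` in absolute value, and if `β < 1` the leading eigenvector is a multiple of the
all-ones vector, to which `y` is orthogonal. The triangle inequality finishes.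
-/

set_option autoImplicit false

open scoped RealInnerProductSpace

/-- The local Krasulina pseudo-gradient `h_i(v) = C_i v − (vᵀC_i v/‖v‖²) v`. -/
noncomputable def pgrad {d : ℕ} (A : Matrix (Fin d) (Fin d) ℝ)
    (v : EuclideanSpace ℝ (Fin d)) : EuclideanSpace ℝ (Fin d) :=
  matVec A v - (⟪v, matVec A v⟫ / ‖v‖ ^ 2) • v

open Finset

namespace LinearMap.IsSymmetric

variable {E : Type*} [NormedAddCommGroup E] [InnerProductSpace ℝ E]

theorem inner_apply_eq_of_apply_eq_smul {A : E →ₗ[ℝ] E} (hA : A.IsSymmetric) {w : E} {μ : ℝ}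
    (hw : A w = μ • w) (v : E) : ⟪w, A v⟫ = μ * ⟪w, v⟫ := by
  rw [← hA, hw, real_inner_smul_left]

end LinearMap.IsSymmetric

namespace OrthonormalBasis

variable {ι E : Type*} [Fintype ι] [NormedAddCommGroup E] [InnerProductSpace ℝ E]

theorem norm_apply_le_of_eigen (b : OrthonormalBasis ι ℝ E) {A : E →ₗ[ℝ] E}
    (hA : A.IsSymmetric) {μ : ι → ℝ} (hb : ∀ k, A (b k) = μ k • b k) {c : ℝ} {v : E}
    (hv : ∀ k, ⟪b k, v⟫ ≠ 0 → |μ k| ≤ c) : ‖A v‖ ≤ c * ‖v‖ := by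
  rcases eq_or_ne v 0 with rfl | hv0
  · simp
  obtain ⟨k, -, hk⟩ : ∃ k ∈ univ, ⟪b k, v⟫ ^ 2 ≠ 0 :=
    exists_ne_zero_of_sum_ne_zero (by rw [b.sum_sq_inner_right]; positivity)
  have hc : 0 ≤ c := (abs_nonneg _).trans (hv k (pow_ne_zero_iff two_ne_zero |>.mp hk))
  refine (pow_le_pow_iff_left₀ (norm_nonneg _) (by positivity) two_ne_zero).mp ?_
  rw [← b.sum_sq_inner_right, mul_pow, ← b.sum_sq_inner_right, mul_sum]
  refine sum_le_sum fun k _ => ?_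
  rw [hA.inner_apply_eq_of_apply_eq_smul (hb k), mul_pow]
  by_cases hk : ⟪b k, v⟫ = 0
  · simp [hk]
  · have := abs_le.mp (hv k hk)
    exact mul_le_mul_of_nonneg_right (sq_le_sq' this.1 this.2) (sq_nonneg _)

theorem inner_eq_zero_of_inner_eigenvector_eq_zero (b : OrthonormalBasis ι ℝ E)
    {A : E →ₗ[ℝ] E} (hA : A.IsSymmetric) {μ : ι → ℝ} (hb : ∀ k, A (b k) = μ k • b k)
    {k₀ : ι} {ν : ℝ} {w v : E} (hw : A w = ν • w) (hw0 : w ≠ 0) (hν : ∀ k ≠ k₀, μ k ≠ ν)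
    (hv : ⟪w, v⟫ = 0) : ⟪b k₀, v⟫ = 0 := by
  have horth : ∀ k ≠ k₀, ⟪b k, w⟫ = 0 := fun k hk => by
    have h := hA.inner_apply_eq_of_apply_eq_smul (hb k) w
    rw [hw, real_inner_smul_right] at h
    exact (mul_eq_zero.mp (by linarith : (μ k - ν) * ⟪b k, w⟫ = 0)).resolve_left
      (sub_ne_zero.mpr (hν k hk))
  have hw_eq : w = ⟪b k₀, w⟫ • b k₀ :=
    calc w = ∑ k, ⟪b k, w⟫ • b k := (b.sum_repr' w).symm
      _ = ⟪b k₀, w⟫ • b k₀ :=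
        sum_eq_single k₀ (fun k _ hk => by rw [horth k hk, zero_smul]) (by simp)
  have hcoef : ⟪b k₀, w⟫ ≠ 0 := fun h => hw0 (by rw [hw_eq, h, zero_smul])
  rw [hw_eq, real_inner_smul_left] at hv
  exact (mul_eq_zero.mp hv).resolve_left hcoef

end OrthonormalBasis

theorem norm_matVec_add_self_le {M : ℕ} {W : Matrix (Fin M) (Fin M) ℝ} (hWs : W.IsSymm)
    (hWrow : ∀ i, ∑ j, W i j = 1) {μ : Fin M → ℝ} {u : Fin M → EuclideanSpace ℝ (Fin M)}
    (hu : Orthonormal ℝ u) (hWeig : ∀ k, matVec W (u k) = μ k • u k) {k₀ : Fin M}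
    (hμ₀ : μ k₀ = 1) {β : ℝ} (hβ : ∀ k ≠ k₀, |μ k| ≤ β) {v : EuclideanSpace ℝ (Fin M)}
    (hv : ∑ i, v i = 0) : ‖matVec W v + v‖ ≤ (1 + β) * ‖v‖ := by
  let b : OrthonormalBasis (Fin M) ℝ (EuclideanSpace ℝ (Fin M)) :=
    .mk hu (hu.linearIndependent.span_eq_top_of_card_eq_finrank' (by simp)).ge
  let A := Matrix.toEuclideanLin (W + 1)
  have hA : A.IsSymmetric := Matrix.isSymmetric_toEuclideanLin_iff.mpr
    (Matrix.isHermitian_iff_isSymm.mpr (hWs.add Matrix.isSymm_one))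
  have hAv : ∀ v, A v = matVec W v + v := fun v => by
    simp [A, matVec, Matrix.toLpLin_apply]
  have hAb : ∀ k, A (b k) = (1 + μ k) • b k := fun k => by
    rw [hAv, OrthonormalBasis.coe_mk, hWeig, add_smul, one_smul, add_comm]
  rw [← hAv]
  refine b.norm_apply_le_of_eigen hA hAb fun k hk => ?_
  rcases eq_or_ne k k₀ with rfl | hk₀
  · -- if `β < 1`, the all-ones vector spans the `1`-eigenspace of `W`, and `v` is orthogonal to it
    by_contra hlt
    have hβ1 : β < 1 := by rw [hμ₀] at hlt; norm_num at hlt; linarith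
    let ones : EuclideanSpace ℝ (Fin M) := WithLp.toLp 2 fun _ => 1
    refine hk (b.inner_eq_zero_of_inner_eigenvector_eq_zero hA hAb (ν := 2) (w := ones) ?_ ?_ ?_ ?_)
    · ext i
      simp only [hAv, matVec, PiLp.add_apply, Matrix.mulVec, dotProduct, mul_one, hWrow i,
        PiLp.smul_apply, smul_eq_mul, ones]
      norm_num
    · intro h
      simpa [ones] using congrArg (fun z : EuclideanSpace ℝ (Fin M) => z k) h
    · intro k' hk' h
      have := abs_le.mp (hβ k' hk')
      linarith
    · simpa [ones, PiLp.inner_apply] using hv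
  · calc |1 + μ k| ≤ |1| + |μ k| := abs_add_le _ _
      _ ≤ 1 + β := by simpa using hβ k hk₀

section Columns

variable {ι κ : Type*} [Fintype ι] [Fintype κ]

theorem norm_sq_toLp_eq_sum_norm_sq_column (Z : ι → EuclideanSpace ℝ κ) :
    ‖WithLp.toLp 2 Z‖ ^ 2 = ∑ l, ‖WithLp.toLp 2 fun i => Z i l‖ ^ 2 := by
  simp only [PiLp.norm_sq_eq_of_L2]
  exact sum_comm

theorem norm_toLp_le_of_column_norm_le {c : ℝ} (hc : 0 ≤ c) {Y Z : ι → EuclideanSpace ℝ κ}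
    (h : ∀ l, ‖WithLp.toLp 2 fun i => Z i l‖ ≤ c * ‖WithLp.toLp 2 fun i => Y i l‖) :
    ‖WithLp.toLp 2 Z‖ ≤ c * ‖WithLp.toLp 2 Y‖ := by
  refine (pow_le_pow_iff_left₀ (norm_nonneg _) (by positivity) two_ne_zero).mp ?_
  rw [mul_pow, norm_sq_toLp_eq_sum_norm_sq_column, norm_sq_toLp_eq_sum_norm_sq_column, mul_sum]
  exact sum_le_sum fun l _ => by rw [← mul_pow]; exact pow_le_pow_left₀ (norm_nonneg _) (h l) 2

end Columns

section LazyMix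

variable {ι E : Type*} [Fintype ι] [AddCommGroup E] [Module ℝ E]

noncomputable def lazyMix (W : Matrix ι ι ℝ) (X : ι → E) (i : ι) : E :=
  (1 / 2 : ℝ) • X i + ∑ j, (W i j / 2) • X j

noncomputable def mean (X : ι → E) : E :=
  (Fintype.card ι : ℝ)⁻¹ • ∑ i, X i

variable {W : Matrix ι ι ℝ}

theorem sum_lazyMix (hWcol : ∀ j, ∑ i, W i j = 1) (X : ι → E) :
    ∑ i, lazyMix W X i = ∑ i, X i := by
  simp only [lazyMix, sum_add_distrib]
  rw [sum_comm]
  simp only [← sum_smul, ← sum_div, hWcol, ← smul_sum]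
  module

theorem lazyMix_sub_const (hWrow : ∀ i, ∑ j, W i j = 1) (X : ι → E) (c : E) (i : ι) :
    lazyMix W (fun j => X j - c) i = lazyMix W X i - c := by
  simp only [lazyMix, smul_sub, sum_sub_distrib, ← sum_smul, ← sum_div, hWrow]
  module

theorem sum_sub_mean (X : ι → E) : ∑ i, (X i - mean X) = 0 := by
  rcases isEmpty_or_nonempty ι with _ | _
  · simp
  rw [sum_sub_distrib, sum_const, card_univ, mean, ← Nat.cast_smul_eq_nsmul ℝ, smul_smul,
    mul_inv_cancel₀ (by positivity), one_smul, sub_self]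

theorem mean_lazyMix_add_smul (hWcol : ∀ j, ∑ i, W i j = 1) (X S : ι → E) (α : ℝ) :
    mean (fun i => lazyMix W X i + α • S i) = mean X + α • mean S := by
  simp only [mean, sum_add_distrib, sum_lazyMix hWcol, ← smul_sum]
  module

theorem lazyMix_add_smul_sub_mean (hWrow : ∀ i, ∑ j, W i j = 1)
    (hWcol : ∀ j, ∑ i, W i j = 1) (X S : ι → E) (α : ℝ) (i : ι) :
    lazyMix W X i + α • S i - mean (fun j => lazyMix W X j + α • S j) =
      lazyMix W (fun j => X j - mean X) i + α • (S i - mean S) := by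
  rw [mean_lazyMix_add_smul hWcol, lazyMix_sub_const hWrow]
  module

end LazyMix

theorem norm_lazyMix_le {M d : ℕ} {W : Matrix (Fin M) (Fin M) ℝ} {c : ℝ} (hc : 0 ≤ c)
    (hW : ∀ v : EuclideanSpace ℝ (Fin M), ∑ i, v i = 0 → ‖matVec W v + v‖ ≤ c * ‖v‖)
    {Y : Fin M → EuclideanSpace ℝ (Fin d)} (hY : ∑ i, Y i = 0) :
    ‖WithLp.toLp 2 (lazyMix W Y)‖ ≤ c / 2 * ‖WithLp.toLp 2 Y‖ := by
  refine norm_toLp_le_of_column_norm_le (by positivity) fun l => ?_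
  set y : EuclideanSpace ℝ (Fin M) := WithLp.toLp 2 fun i => Y i l
  have hcol : (WithLp.toLp 2 fun i => lazyMix W Y i l) = (1 / 2 : ℝ) • (matVec W y + y) := by
    ext i
    simp only [lazyMix, one_div, PiLp.add_apply, PiLp.smul_apply, smul_eq_mul, WithLp.ofLp_sum,
      WithLp.ofLp_smul, Finset.sum_apply, Pi.smul_apply, matVec, smul_add, Matrix.mulVec, dotProduct, y]
    rw [mul_sum, add_comm]
    exact congrArg (· + _) (sum_congr rfl fun j _ => by ring)
  have hy : ∑ i, y i = 0 := by simpa [y] using congrArg (fun z => z l) hY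
  rw [hcol, norm_smul]
  calc ‖(1 / 2 : ℝ)‖ * ‖matVec W y + y‖ ≤ 1 / 2 * (c * ‖y‖) := by
        rw [Real.norm_of_nonneg (by norm_num)]; gcongr; exact hW y hy
    _ = c / 2 * ‖y‖ := by ring

theorem sqrt_sum_norm_sq_eq_norm_toLp {ι E : Type*} [Fintype ι] [SeminormedAddCommGroup E]
    (X : ι → E) : √(∑ i, ‖X i‖ ^ 2) = ‖WithLp.toLp 2 X‖ :=
  (PiLp.norm_eq_of_L2 _).symm

/-- consensus error recursion for FAST-PCA (first eigenvector).
Here `t = T + 1 ≥ 1`, `x̄^(t) = (1/M)Σᵢ x_i^(t)`, `g^(t) = (1/M)Σᵢ h_i(x_i^(t))`, and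
`β = max{|λ₂(W)|, |λ_M(W)|}` (eigenvalues of `W` in decreasing order, 0-based indexing). -/
theorem fastpca_consensus_error_recursion
    {d M : ℕ} (hM : 2 ≤ M)
    (Ci : Fin M → Matrix (Fin d) (Fin d) ℝ)
    (W : Matrix (Fin M) (Fin M) ℝ) (hWs : W.IsSymm)
    (hWrow : ∀ i, ∑ j, W i j = 1) (hWcol : ∀ j, ∑ i, W i j = 1)
    (μ : Fin M → ℝ) (u : Fin M → EuclideanSpace ℝ (Fin M)) (hu : Orthonormal ℝ u)
    (hWeig : ∀ i, matVec W (u i) = μ i • u i)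
    (hμmono : ∀ i j : Fin M, i ≤ j → μ j ≤ μ i) (hμ0 : μ ⟨0, by omega⟩ = 1)
    (β : ℝ) (hβ : β = max |μ ⟨1, by omega⟩| |μ ⟨M - 1, by omega⟩|)
    (α : ℝ) (hα0 : 0 < α)
    (x s : ℕ → Fin M → EuclideanSpace ℝ (Fin d))
    (hxupd : ∀ t i, x (t + 1) i =
      (1 / 2 : ℝ) • x t i + ∑ j, (W i j / 2) • x t j + α • s t i)
    (T : ℕ)
    (havg : (M : ℝ)⁻¹ • ∑ i, s T i = (M : ℝ)⁻¹ • ∑ i, pgrad (Ci i) (x T i)) :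
    Real.sqrt (∑ i, ‖x (T + 1) i - (M : ℝ)⁻¹ • ∑ j, x (T + 1) j‖ ^ 2) ≤
      (1 + β) / 2 * Real.sqrt (∑ i, ‖x T i - (M : ℝ)⁻¹ • ∑ j, x T j‖ ^ 2) +
        α * Real.sqrt (∑ i, ‖s T i - (M : ℝ)⁻¹ • ∑ j, pgrad (Ci j) (x T j)‖ ^ 2) := by
  have hβ0 : 0 ≤ β := hβ ▸ (abs_nonneg _).trans (le_max_left _ _)
  have hμ_abs (k : Fin M) (hk : k ≠ ⟨0, by omega⟩) : |μ k| ≤ β := by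
    have hk₁ : 1 ≤ (k : ℕ) := Nat.one_le_iff_ne_zero.mpr fun h => hk (Fin.ext h)
    rw [hβ, max_comm]
    exact abs_le_max_abs_abs (hμmono _ _ (Fin.le_def.mpr (Nat.le_sub_one_of_lt k.isLt)))
      (hμmono _ _ (Fin.le_def.mpr hk₁))
  have hgap (v : EuclideanSpace ℝ (Fin M)) (hv : ∑ i, v i = 0) :
      ‖matVec W v + v‖ ≤ (1 + β) * ‖v‖ :=
    norm_matVec_add_self_le hWs hWrow hu hWeig hμ0 hμ_abs hv
  have hmean (X : Fin M → EuclideanSpace ℝ (Fin d)) : (M : ℝ)⁻¹ • ∑ i, X i = mean X := by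
    simp [mean]
  have hx : x (T + 1) = fun i => lazyMix W (x T) i + α • s T i := funext (hxupd T)
  rw [← havg, hmean, hmean, hmean, hx]
  simp only [lazyMix_add_smul_sub_mean hWrow hWcol, sqrt_sum_norm_sq_eq_norm_toLp]
  set y := fun j => x T j - mean (x T)
  set e := fun i => s T i - mean (s T)
  calc ‖WithLp.toLp 2 fun i => lazyMix W y i + α • e i‖
      = ‖WithLp.toLp 2 (lazyMix W y) + α • WithLp.toLp 2 e‖ := rfl
    _ ≤ ‖WithLp.toLp 2 (lazyMix W y)‖ + ‖α • WithLp.toLp 2 e‖ := norm_add_le _ _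
    _ = ‖WithLp.toLp 2 (lazyMix W y)‖ + α * ‖WithLp.toLp 2 e‖ := by
        rw [norm_smul, Real.norm_of_nonneg hα0.le]
    _ ≤ (1 + β) / 2 * ‖WithLp.toLp 2 y‖ + α * ‖WithLp.toLp 2 e‖ := by
        gcongr
        exact norm_lazyMix_le (by linarith) hgap (sum_sub_mean _)
end
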